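/- Let k ≥ 2 be an integer. With the conventions x_0 = x_1 = x_{k+1} = x_{k+2} = 0, define for i = 2, …, k the polynomial H_i(x_2, …, x_k) = −2x_{i−1}² + 4x_i² − 2x_{i+1}² − x_i x_{i+1} + x_{i−1} x_{i−2} − x_{i−1} x_i + x_{i+1} x_{i+2}, and set x_i⁰ = (i−1)(k−i+1)/2 for i = 2, …, k. Let 𝓗 be the (k−1)×(k−1) real matrix with entries 𝓗_{l j} = x⁰_{j+1} · (∂H_{l+1}/∂x_{j+1})(x_2⁰, …, x_k⁰) for l, j = 1, …, k−1. Then 𝓗 is diagonalizable over ℝ and its eigenvalues are exactly the k−1 numbers λ_m = T_m (T_m + 1) with T_m = m(m+1)/2, for m = 1, …, k−1 (i.e. λ_1 = 1·2, λ_2 = 3·4, λ_3 = 6·7, …, λ_{k−1} = ((k−1)k/2)·((k−1)k/2 + 1)). -/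
import Mathlib


open Real Matrix

/-- The `i`-th equation of the algebraic system:
`H_i(x) = −2x_{i−1}² + 4x_i² − 2x_{i+1}² − x_i x_{i+1} + x_{i−1}x_{i−2} − x_{i−1}x_i + x_{i+1}x_{i+2}`. -/
def Hsys (x : ℕ → ℝ) (i : ℕ) : ℝ :=
  -2 * (x (i - 1)) ^ 2 + 4 * (x i) ^ 2 - 2 * (x (i + 1)) ^ 2 - x i * x (i + 1)
    + x (i - 1) * x (i - 2) - x (i - 1) * x i + x (i + 1) * x (i + 2)

/-- The exact solution `x_i⁰ = (i−1)(k−i+1)/2`, extended by `0` outside `{2,…,k}`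
(encoding the conventions `x₀ = x₁ = x_{k+1} = x_{k+2} = 0`). -/
noncomputable def xZero (k : ℕ) : ℕ → ℝ := fun i =>
  if 2 ≤ i ∧ i ≤ k then ((i : ℝ) - 1) * ((k : ℝ) - (i : ℝ) + 1) / 2 else 0

/-- The linearization matrix `𝓗_{lj} = x⁰_{j+1} ∂H_{l+1}/∂x_{j+1}(x⁰)`, for
`l, j = 1,…,k−1` (indexed here by `Fin (k−1)` via `l ↦ l+1`). -/
noncomputable def Hmat (k : ℕ) : Matrix (Fin (k - 1)) (Fin (k - 1)) ℝ := fun l j =>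
  xZero k (j.1 + 2) *
    deriv (fun y : ℝ => Hsys (Function.update (xZero k) (j.1 + 2) y) (l.1 + 2))
      (xZero k (j.1 + 2))

open Polynomial

namespace CHaux

/-- `q(t) = (t-1)(k+1-t)/2`. -/
noncomputable def qr (k t : ℕ) : ℝ := ((t : ℝ) - 1) * ((k : ℝ) - (t : ℝ) + 1) / 2

lemma qr_one (k : ℕ) : qr k 1 = 0 := by simp [qr]

lemma qr_top (k : ℕ) : qr k (k + 1) = 0 := by
  unfold qr; push_cast; ring

lemma xZero_eq_qr (k r : ℕ) (h1 : 1 ≤ r) (h2 : r ≤ k + 1) : xZero k r = qr k r := by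
  unfold xZero qr
  split_ifs with h
  · rfl
  · have : r = 1 ∨ r = k + 1 := by omega
    rcases this with h' | h' <;> subst h' <;> push_cast <;> ring

lemma deriv_quad (A D E c : ℝ) :
    deriv (fun y : ℝ => A * (y - c) ^ 2 + D * (y - c) + E) c = D := by
  have h1 : HasDerivAt (fun y : ℝ => y - c) 1 c := (hasDerivAt_id c).sub_const c
  have h2 := h1.pow 2
  have h3 := ((h2.const_mul A).add (h1.const_mul D)).add_const E
  simpa using h3.deriv

lemma deriv_of_quad (f : ℝ → ℝ) (A D E c : ℝ)
    (h : ∀ y, f y = A * (y - c) ^ 2 + D * (y - c) + E) : deriv f c = D := by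
  rw [show f = fun y => A * (y - c) ^ 2 + D * (y - c) + E from funext h, deriv_quad]

noncomputable def eps (r p : ℕ) : ℝ := if r = p then 1 else 0

lemma update_expand (x : ℕ → ℝ) (p : ℕ) (y : ℝ) (r : ℕ) :
    Function.update x p y r = x r + (y - x p) * eps r p := by
  rw [Function.update_apply, eps]
  split_ifs with h
  · subst h; ring
  · ring

/-- The pentadiagonal form of `Hmat`. -/
noncomputable def Hpent (k : ℕ) : Matrix (Fin (k - 1)) (Fin (k - 1)) ℝ := fun l j =>
  if j.1 = l.1 then qr k (l.1+2) * (8 * qr k (l.1+2) - qr k (l.1+3) - qr k (l.1+1))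
  else if j.1 = l.1+1 then qr k (l.1+3) * (-(4 * qr k (l.1+3)) - qr k (l.1+2) + qr k (l.1+4))
  else if j.1 = l.1+2 then qr k (l.1+4) * qr k (l.1+3)
  else if l.1 = j.1+1 then qr k (l.1+1) * (-(4 * qr k (l.1+1)) + qr k (l.1) - qr k (l.1+2))
  else if l.1 = j.1+2 then qr k (l.1) * qr k (l.1+1)
  else 0

lemma hmat_eq (k : ℕ) (hk : 2 ≤ k) (l j : Fin (k - 1)) : Hmat k l j = Hpent k l j := by
  have hl : l.1 < k - 1 := l.2
  have hj : j.1 < k - 1 := j.2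
  set x := xZero k with hx
  set p := j.1 + 2 with hp
  set m := l.1 with hm
  have key : deriv (fun y : ℝ => Hsys (Function.update x p y) (m + 2)) (x p) =
      -(4 * x (m+1)) * eps (m+1) p + 8 * x (m+2) * eps (m+2) p - 4 * x (m+3) * eps (m+3) p
        - (eps (m+2) p * x (m+3) + x (m+2) * eps (m+3) p)
        + (eps (m+1) p * x m + x (m+1) * eps m p)
        - (eps (m+1) p * x (m+2) + x (m+1) * eps (m+2) p)
        + (eps (m+3) p * x (m+4) + x (m+3) * eps (m+4) p) := by
    refine deriv_of_quad _
      (-2 * (eps (m+1) p)^2 + 4 * (eps (m+2) p)^2 - 2 * (eps (m+3) p)^2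
        - eps (m+2) p * eps (m+3) p + eps (m+1) p * eps m p - eps (m+1) p * eps (m+2) p
        + eps (m+3) p * eps (m+4) p)
      _
      (-2 * (x (m+1))^2 + 4 * (x (m+2))^2 - 2 * (x (m+3))^2 - x (m+2) * x (m+3)
        + x (m+1) * x m - x (m+1) * x (m+2) + x (m+3) * x (m+4))
      _ ?_
    intro y
    show Hsys _ _ = _
    unfold Hsys
    simp only [show m+2-1 = m+1 from rfl, show m+2-2 = m from rfl,
      show m+2+1 = m+3 from rfl, show m+2+2 = m+4 from rfl, update_expand]
    ring
  unfold Hmat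
  rw [← hx, ← hp, ← hm, key]
  unfold Hpent
  rw [← hm]
  have heps : ∀ r q : ℕ, r ≠ q → eps r q = 0 := fun r q h => by simp [eps, h]
  have heps1 : ∀ r q : ℕ, r = q → eps r q = 1 := fun r q h => by simp [eps, h]
  split_ifs with h1 h2 h3 h4 h5
  · -- j = l
    rw [heps1 (m+2) p (by omega), heps (m+1) p (by omega), heps (m+3) p (by omega),
      heps m p (by omega), heps (m+4) p (by omega)]
    rw [hx, xZero_eq_qr k (m+1) (by omega) (by omega), xZero_eq_qr k (m+2) (by omega) (by omega),
      xZero_eq_qr k (m+3) (by omega) (by omega), hp, show j.1+2 = m+2 by omega,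
      xZero_eq_qr k (m+2) (by omega) (by omega)]
    ring
  · -- j = l+1
    rw [heps1 (m+3) p (by omega), heps (m+1) p (by omega), heps (m+2) p (by omega),
      heps m p (by omega), heps (m+4) p (by omega)]
    rw [hx, xZero_eq_qr k (m+2) (by omega) (by omega), xZero_eq_qr k (m+3) (by omega) (by omega),
      xZero_eq_qr k (m+4) (by omega) (by omega), hp, show j.1+2 = m+3 by omega,
      xZero_eq_qr k (m+3) (by omega) (by omega)]
    ring
  · -- j = l+2
    rw [heps1 (m+4) p (by omega), heps (m+1) p (by omega), heps (m+2) p (by omega),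
      heps m p (by omega), heps (m+3) p (by omega)]
    rw [hx, xZero_eq_qr k (m+3) (by omega) (by omega), hp, show j.1+2 = m+4 by omega,
      xZero_eq_qr k (m+4) (by omega) (by omega)]
    ring
  · -- l = j+1
    rw [heps1 (m+1) p (by omega), heps (m+2) p (by omega), heps (m+3) p (by omega),
      heps m p (by omega), heps (m+4) p (by omega)]
    rw [hx, xZero_eq_qr k m (by omega) (by omega), xZero_eq_qr k (m+1) (by omega) (by omega),
      xZero_eq_qr k (m+2) (by omega) (by omega), hp, show j.1+2 = m+1 by omega,
      xZero_eq_qr k (m+1) (by omega) (by omega)]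
    ring
  · -- l = j+2
    rw [heps1 m p (by omega), heps (m+1) p (by omega), heps (m+2) p (by omega),
      heps (m+3) p (by omega), heps (m+4) p (by omega)]
    rw [hx, xZero_eq_qr k (m+1) (by omega) (by omega), hp, show j.1+2 = m by omega,
      xZero_eq_qr k m (by omega) (by omega)]
    ring
  · -- far
    rw [heps m p (by omega), heps (m+1) p (by omega), heps (m+2) p (by omega),
      heps (m+3) p (by omega), heps (m+4) p (by omega)]
    ring






noncomputable def up (n s : ℕ) (f : ℕ → ℝ) : Matrix (Fin n) (Fin n) ℝ :=
  fun l j => if j.1 = l.1 + s then f l.1 else 0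

noncomputable def dn (n s : ℕ) (f : ℕ → ℝ) : Matrix (Fin n) (Fin n) ℝ :=
  fun l j => if l.1 = j.1 + s then f l.1 else 0

lemma up_mul (n s : ℕ) (f : ℕ → ℝ) (M : Matrix (Fin n) (Fin n) ℝ) (l j : Fin n) :
    (up n s f * M) l j = if h : l.1 + s < n then f l.1 * M ⟨l.1 + s, h⟩ j else 0 := by
  rw [Matrix.mul_apply]
  split_ifs with h
  · rw [Finset.sum_eq_single (⟨l.1 + s, h⟩ : Fin n)]
    · simp [up]
    · intro b _ hb
      have : ¬ (b.1 = l.1 + s) := fun hc => hb (Fin.ext hc)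
      simp [up, this]
    · simp
  · apply Finset.sum_eq_zero
    intro c _
    have : ¬ (c.1 = l.1 + s) := by omega
    simp [up, this]

lemma dn_mul (n s : ℕ) (f : ℕ → ℝ) (M : Matrix (Fin n) (Fin n) ℝ) (l j : Fin n) :
    (dn n s f * M) l j =
      if h : s ≤ l.1 then f l.1 * M ⟨l.1 - s, by omega⟩ j else 0 := by
  rw [Matrix.mul_apply]
  split_ifs with h
  · rw [Finset.sum_eq_single (⟨l.1 - s, by omega⟩ : Fin n)]
    · have : l.1 = l.1 - s + s := by omega
      simp [dn, ← this]
    · intro b _ hb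
      have hb' : b.1 ≠ l.1 - s := fun hc => hb (Fin.ext hc)
      have : ¬ (l.1 = b.1 + s) := by omega
      simp [dn, this]
    · simp
  · apply Finset.sum_eq_zero
    intro c _
    have : ¬ (l.1 = c.1 + s) := by omega
    simp [dn, this]

/-- The tridiagonal matrix `N`. -/
noncomputable def Nmat (k : ℕ) : Matrix (Fin (k - 1)) (Fin (k - 1)) ℝ := fun l j =>
  if j.1 = l.1 then 2 * qr k (l.1 + 2)
  else if j.1 = l.1 + 1 then -qr k (l.1 + 3)
  else if l.1 = j.1 + 1 then -qr k (l.1 + 1)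
  else 0

lemma nmat_split (k : ℕ) :
    Nmat k = up (k-1) 0 (fun t => 2 * qr k (t + 2)) + up (k-1) 1 (fun t => -qr k (t + 3))
      + dn (k-1) 1 (fun t => -qr k (t + 1)) := by
  funext l j
  simp only [Matrix.add_apply, Nmat, up, dn]
  split_ifs <;> first | omega | ring


lemma pent_eq (k : ℕ) (hk : 2 ≤ k) : Hpent k = Nmat k * Nmat k + Nmat k := by
  funext l j
  have hl : l.1 < k - 1 := l.2
  have hj : j.1 < k - 1 := j.2
  have expand : (Nmat k * Nmat k) l j =
      (if h : l.1 + 0 < k-1 then 2 * qr k (l.1 + 2) * Nmat k ⟨l.1 + 0, h⟩ j else 0)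
      + (if h : l.1 + 1 < k-1 then -qr k (l.1 + 3) * Nmat k ⟨l.1 + 1, h⟩ j else 0)
      + (if h : 1 ≤ l.1 then -qr k (l.1 + 1) * Nmat k ⟨l.1 - 1, by omega⟩ j else 0) := by
    nth_rewrite 1 [nmat_split k]
    rw [Matrix.add_mul, Matrix.add_mul, Matrix.add_apply, Matrix.add_apply,
      up_mul, up_mul, dn_mul]
  have T1eq : (if h : l.1 + 0 < k-1 then 2 * qr k (l.1 + 2) * Nmat k ⟨l.1 + 0, h⟩ j else 0)
      = 2 * qr k (l.1+2) * (if j.1 = l.1 then 2 * qr k (l.1+2)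
          else if j.1 = l.1+1 then -qr k (l.1+3)
          else if l.1 = j.1+1 then -qr k (l.1+1) else 0) := by
    rw [dif_pos (by omega : l.1 + 0 < k - 1)]
    have h0 : (⟨l.1 + 0, by omega⟩ : Fin (k-1)) = l := by ext; simp
    rw [h0]; rfl
  have T2eq : (if h : l.1 + 1 < k-1 then -qr k (l.1 + 3) * Nmat k ⟨l.1 + 1, h⟩ j else 0)
      = -qr k (l.1+3) * (if j.1 = l.1+1 then 2 * qr k (l.1+3)
          else if j.1 = l.1+2 then -qr k (l.1+4)
          else if l.1 = j.1 then -qr k (l.1+2) else 0) := by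
    split_ifs with h h1 h2 h3 h4 h5 h6
    · simp only [Nmat]
      rw [if_pos (show j.1 = (⟨l.1+1, h⟩ : Fin (k-1)).1 by simpa using h1)]
      try norm_num
    · simp only [Nmat]
      rw [if_neg (show ¬ j.1 = (⟨l.1+1, h⟩ : Fin (k-1)).1 by simpa using h1),
        if_pos (show j.1 = (⟨l.1+1, h⟩ : Fin (k-1)).1 + 1 by simpa using h2)]
      try norm_num
    · simp only [Nmat]
      rw [if_neg (show ¬ j.1 = (⟨l.1+1, h⟩ : Fin (k-1)).1 by simpa using h1),
        if_neg (show ¬ j.1 = (⟨l.1+1, h⟩ : Fin (k-1)).1 + 1 by simpa using h2),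
        if_pos (show (⟨l.1+1, h⟩ : Fin (k-1)).1 = j.1 + 1 by simp; omega)]
      try norm_num
      try rw [show l.1 + 1 + 1 = l.1 + 2 by omega]
    · simp only [Nmat]
      rw [if_neg (show ¬ j.1 = (⟨l.1+1, h⟩ : Fin (k-1)).1 by simpa using h1),
        if_neg (show ¬ j.1 = (⟨l.1+1, h⟩ : Fin (k-1)).1 + 1 by simpa using h2),
        if_neg (show ¬ (⟨l.1+1, h⟩ : Fin (k-1)).1 = j.1 + 1 by simp; omega)]
      try ring
    all_goals (rw [show l.1 + 3 = k + 1 by omega, qr_top]; ring)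
  have T3eq : (if h : 1 ≤ l.1 then -qr k (l.1 + 1) * Nmat k ⟨l.1 - 1, by omega⟩ j else 0)
      = -qr k (l.1+1) * (if j.1 + 1 = l.1 then 2 * qr k (l.1+1)
          else if j.1 = l.1 then -qr k (l.1+2)
          else if l.1 = j.1+2 then -qr k (l.1) else 0) := by
    split_ifs with h h1 h2 h3 h4 h5 h6
    · simp only [Nmat]
      rw [if_pos (show j.1 = (⟨l.1-1, by omega⟩ : Fin (k-1)).1 by simp; omega),
        show l.1 - 1 + 2 = l.1 + 1 by omega]
      try norm_num
    · simp only [Nmat]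
      rw [if_neg (show ¬ j.1 = (⟨l.1-1, by omega⟩ : Fin (k-1)).1 by simp; omega),
        if_pos (show j.1 = (⟨l.1-1, by omega⟩ : Fin (k-1)).1 + 1 by simp; omega),
        show l.1 - 1 + 3 = l.1 + 2 by omega]
      try norm_num
    · simp only [Nmat]
      rw [if_neg (show ¬ j.1 = (⟨l.1-1, by omega⟩ : Fin (k-1)).1 by simp; omega),
        if_neg (show ¬ j.1 = (⟨l.1-1, by omega⟩ : Fin (k-1)).1 + 1 by simp; omega),
        if_pos (show (⟨l.1-1, by omega⟩ : Fin (k-1)).1 = j.1 + 1 by simp; omega),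
        show l.1 - 1 + 1 = l.1 by omega]
      try norm_num
    · simp only [Nmat]
      rw [if_neg (show ¬ j.1 = (⟨l.1-1, by omega⟩ : Fin (k-1)).1 by simp; omega),
        if_neg (show ¬ j.1 = (⟨l.1-1, by omega⟩ : Fin (k-1)).1 + 1 by simp; omega),
        if_neg (show ¬ (⟨l.1-1, by omega⟩ : Fin (k-1)).1 = j.1 + 1 by simp; omega)]
      try ring
    all_goals (rw [show l.1 + 1 = 1 by omega, qr_one]; ring)
  rw [Matrix.add_apply, expand, T1eq, T2eq, T3eq]
  simp only [Hpent, Nmat]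
  by_cases h1 : j.1 = l.1
  · simp only [if_pos h1, if_pos (show l.1 = j.1 by omega),
      if_neg (show ¬ (j.1 = l.1 + 1) by omega), if_neg (show ¬ (j.1 = l.1 + 2) by omega),
      if_neg (show ¬ (l.1 = j.1 + 1) by omega), if_neg (show ¬ (l.1 = j.1 + 2) by omega),
      if_neg (show ¬ (j.1 + 1 = l.1) by omega)]
    unfold qr; push_cast; ring
  · by_cases h2 : j.1 = l.1 + 1
    · simp only [if_pos h2, if_neg h1, if_neg (show ¬ (l.1 = j.1) by omega),
        if_neg (show ¬ (j.1 = l.1 + 2) by omega), if_neg (show ¬ (l.1 = j.1 + 1) by omega),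
        if_neg (show ¬ (l.1 = j.1 + 2) by omega), if_neg (show ¬ (j.1 + 1 = l.1) by omega)]
      unfold qr; push_cast; ring
    · by_cases h3 : j.1 = l.1 + 2
      · simp only [if_pos h3, if_neg h1, if_neg h2, if_neg (show ¬ (l.1 = j.1) by omega),
          if_neg (show ¬ (l.1 = j.1 + 1) by omega), if_neg (show ¬ (l.1 = j.1 + 2) by omega),
          if_neg (show ¬ (j.1 + 1 = l.1) by omega)]
        unfold qr; push_cast; ring
      · by_cases h4 : l.1 = j.1 + 1
        · simp only [if_pos h4, if_pos (show j.1 + 1 = l.1 by omega), if_neg h1, if_neg h2,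
            if_neg h3, if_neg (show ¬ (l.1 = j.1) by omega),
            if_neg (show ¬ (l.1 = j.1 + 2) by omega)]
          unfold qr; push_cast; ring
        · by_cases h5 : l.1 = j.1 + 2
          · simp only [if_pos h5, if_neg h1, if_neg h2, if_neg h3, if_neg h4,
              if_neg (show ¬ (l.1 = j.1) by omega), if_neg (show ¬ (j.1 + 1 = l.1) by omega)]
            unfold qr; push_cast; ring
          · simp only [if_neg h1, if_neg h2, if_neg h3, if_neg h4, if_neg h5,
              if_neg (show ¬ (l.1 = j.1) by omega), if_neg (show ¬ (j.1 + 1 = l.1) by omega)]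
            ring



/-- `w m = 2X^m - (X+1)^m - (X-1)^m`. -/
noncomputable def wP (m : ℕ) : Polynomial ℝ :=
  Polynomial.C 2 * Polynomial.X ^ m - (Polynomial.X + 1) ^ m - (Polynomial.X - 1) ^ m

lemma coeff_wP (m e : ℕ) :
    (wP m).coeff e = 2 * (if e = m then 1 else 0) - (m.choose e : ℝ)
      - (-1 : ℝ) ^ (m - e) * (m.choose e : ℝ) := by
  have h1 : ((Polynomial.X + 1 : Polynomial ℝ) ^ m).coeff e = (m.choose e : ℝ) :=
    coeff_X_add_one_pow ℝ m e
  have h2 : ((Polynomial.X - 1 : Polynomial ℝ) ^ m).coeff e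
      = (-1 : ℝ) ^ (m - e) * (m.choose e : ℝ) := by
    have : (Polynomial.X - 1 : Polynomial ℝ) = Polynomial.X + Polynomial.C (-1) := by
      simp [sub_eq_add_neg]
    rw [this, coeff_X_add_C_pow]
  rw [wP]
  simp only [Polynomial.coeff_sub, Polynomial.coeff_C_mul, Polynomial.coeff_X_pow, h1, h2]

lemma coeff_wP_high (m e : ℕ) (he : m ≤ e + 1) : (wP m).coeff e = 0 := by
  rcases Nat.lt_or_ge e m with h | h
  · -- e = m - 1
    have hm : m = e + 1 := by omega
    subst hm
    rw [coeff_wP]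
    rw [if_neg (by omega), Nat.choose_succ_self_right]
    simp
  · rcases Nat.eq_or_lt_of_le h with h' | h'
    · subst h'
      rw [coeff_wP, if_pos rfl, Nat.choose_self]
      norm_num
    · rw [coeff_wP, if_neg (by omega), Nat.choose_eq_zero_of_lt h']
      simp

lemma coeff_wP_sub_two (m : ℕ) : (wP (m + 2)).coeff m = -(((m + 1) * (m + 2) : ℕ) : ℝ) := by
  rw [coeff_wP, if_neg (by omega), show m + 2 - m = 2 by omega]
  have : (m + 2).choose m = (m + 1) * (m + 2) / 2 := by
    rw [← Nat.choose_symm (by omega : m ≤ m + 2), show m + 2 - m = 2 by omega,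
      Nat.choose_two_right, show m + 2 - 1 = m + 1 by omega, Nat.mul_comm]
  rw [this]
  have h2 : (((m + 1) * (m + 2) / 2 : ℕ) : ℝ) * 2 = (((m + 1) * (m + 2) : ℕ) : ℝ) := by
    rw [show ((2:ℝ)) = ((2:ℕ):ℝ) by norm_num, ← Nat.cast_mul,
      Nat.div_mul_cancel (Nat.even_mul_succ_self (m + 1)).two_dvd]
  push_cast at h2 ⊢
  nlinarith [h2]

/-- the polynomial `r_d = -δ²(q·X^d)`, whose evaluations give the action of `N`. -/
noncomputable def rP (k d : ℕ) : Polynomial ℝ :=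
  Polynomial.C (-(1:ℝ)/2) * wP (d + 2) + Polynomial.C (((k:ℝ)+2)/2) * wP (d + 1)
    + Polynomial.C (-((k:ℝ)+1)/2) * wP d

lemma coeff_rP_high (k d e : ℕ) (he : d < e) : (rP k d).coeff e = 0 := by
  unfold rP
  simp only [Polynomial.coeff_add, Polynomial.coeff_C_mul]
  rw [coeff_wP_high (d+2) e (by omega), coeff_wP_high (d+1) e (by omega),
    coeff_wP_high d e (by omega)]
  ring

lemma natDegree_rP_le (k d : ℕ) : (rP k d).natDegree ≤ d :=
  Polynomial.natDegree_le_iff_coeff_eq_zero.2 fun e he => coeff_rP_high k d e he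

lemma coeff_rP_diag (k d : ℕ) : (rP k d).coeff d = (((d + 1) * (d + 2) / 2 : ℕ) : ℝ) := by
  unfold rP
  simp only [Polynomial.coeff_add, Polynomial.coeff_C_mul]
  rw [coeff_wP_sub_two d, coeff_wP_high (d+1) d (by omega), coeff_wP_high d d (by omega)]
  have h2 : (((d + 1) * (d + 2) / 2 : ℕ) : ℝ) * 2 = (((d + 1) * (d + 2) : ℕ) : ℝ) := by
    rw [show ((2:ℝ)) = ((2:ℕ):ℝ) by norm_num, ← Nat.cast_mul,
      Nat.div_mul_cancel (Nat.even_mul_succ_self (d + 1)).two_dvd]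
  push_cast at h2 ⊢
  nlinarith [h2]

lemma eval_rP (k d : ℕ) (t : ℝ) :
    (rP k d).eval t = 2 * (((t:ℝ) - 1) * ((k:ℝ) - t + 1) / 2) * t ^ d
      - (t * ((k:ℝ) - t) / 2) * (t + 1) ^ d
      - ((t - 2) * ((k:ℝ) - t + 2) / 2) * (t - 1) ^ d := by
  unfold rP wP
  simp only [Polynomial.eval_add, Polynomial.eval_mul, Polynomial.eval_sub, Polynomial.eval_C,
    Polynomial.eval_pow, Polynomial.eval_X, Polynomial.eval_one]
  ring



noncomputable def usolve (A : ℕ → ℕ → ℝ) (d : ℕ → ℝ) : ℕ → ℕ → ℝ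
  | i, j =>
    if hij : i < j then
      (∑ t ∈ (Finset.Ioc i j).attach, A i t.1 * usolve A d t.1 j) / (d j - d i)
    else if i = j then 1 else 0
  termination_by i j => j - i
  decreasing_by
    · have ht := t.2
      rw [Finset.mem_Ioc] at ht
      omega

lemma usolve_diag (A : ℕ → ℕ → ℝ) (d : ℕ → ℝ) (i : ℕ) : usolve A d i i = 1 := by
  rw [usolve]
  simp

lemma usolve_lower (A : ℕ → ℕ → ℝ) (d : ℕ → ℝ) {i j : ℕ} (h : j < i) :
    usolve A d i j = 0 := by
  rw [usolve, dif_neg (by omega), if_neg (by omega)]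

lemma usolve_rec (A : ℕ → ℕ → ℝ) (d : ℕ → ℝ) {i j : ℕ} (h : i < j) (hd : d j - d i ≠ 0) :
    (d j - d i) * usolve A d i j = ∑ t ∈ Finset.Ioc i j, A i t * usolve A d t j := by
  rw [usolve, dif_pos h, mul_div_cancel₀ _ hd]
  exact Finset.sum_attach (Finset.Ioc i j) (fun t => A i t * usolve A d t j)

theorem mul_usolve (n : ℕ) (A : Matrix (Fin n) (Fin n) ℝ) (dg : ℕ → ℝ)
    (hA : ∀ i j : Fin n, j.1 < i.1 → A i j = 0)
    (hdiag : ∀ i : Fin n, A i i = dg i.1)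
    (hdist : ∀ p q : ℕ, p < q → dg p ≠ dg q) :
    ∃ U : Matrix (Fin n) (Fin n) ℝ,
      A * U = U * Matrix.diagonal (fun m : Fin n => dg m.1) ∧ IsUnit U.det := by
  set Aext : ℕ → ℕ → ℝ :=
    fun i j => if h : i < n ∧ j < n then A ⟨i, h.1⟩ ⟨j, h.2⟩ else 0 with hAext
  set U : Matrix (Fin n) (Fin n) ℝ := fun i j => usolve Aext dg i.1 j.1 with hU
  have hAe : ∀ (i t : Fin n), A i t = Aext i.1 t.1 := by
    intro i t
    simp only [hAext]
    rw [dif_pos (And.intro i.2 t.2)]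
  have hAe0 : ∀ (i : Fin n) (t : ℕ), t < i.1 → Aext i.1 t = 0 := by
    intro i t ht
    simp only [hAext]
    split_ifs with h
    · exact hA _ _ (by simpa using ht)
    · rfl
  refine ⟨U, ?_, ?_⟩
  · funext i j
    rw [Matrix.mul_apply, Matrix.mul_diagonal]
    have hsum : ∑ t : Fin n, A i t * U t j
        = ∑ t ∈ Finset.range n, Aext i.1 t * usolve Aext dg t j.1 := by
      rw [← Fin.sum_univ_eq_sum_range (fun t => Aext i.1 t * usolve Aext dg t j.1)]
      exact Finset.sum_congr rfl fun t _ => by rw [hAe]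
    rw [hsum]
    rcases Nat.lt_trichotomy i.1 j.1 with hij | hij | hij
    · -- i < j
      have hsub : Finset.Icc i.1 j.1 ⊆ Finset.range n := by
        intro t ht
        rw [Finset.mem_Icc] at ht
        rw [Finset.mem_range]
        omega
      rw [← Finset.sum_subset hsub]
      · rw [Finset.Icc_eq_cons_Ioc (by omega), Finset.sum_cons]
        have hdneq : dg j.1 - dg i.1 ≠ 0 :=
          sub_ne_zero_of_ne (Ne.symm (hdist _ _ hij))
        have := usolve_rec Aext dg hij hdneq
        rw [← this]
        have hAii : Aext i.1 i.1 = dg i.1 := by rw [← hAe i i, hdiag]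
        have e3 : U i j = usolve Aext dg i.1 j.1 := rfl
        rw [hAii, e3]
        ring
      · intro t htr hticc
        rw [Finset.mem_range] at htr
        rw [Finset.mem_Icc] at hticc
        rcases Nat.lt_or_ge t i.1 with h' | h'
        · rw [hAe0 i t h', zero_mul]
        · rw [usolve_lower Aext dg (by omega), mul_zero]
    · -- i = j
      rw [Finset.sum_eq_single i.1]
      · have e1 : Aext i.1 i.1 = dg i.1 := by rw [← hAe i i, hdiag]
        have e2 : usolve Aext dg i.1 j.1 = 1 := by rw [← hij, usolve_diag]
        have e3 : U i j = 1 := by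
          show usolve Aext dg i.1 j.1 = 1
          exact e2
        rw [e1, e2, e3, hij]
        ring
      · intro t _ hti
        rcases Nat.lt_or_ge t i.1 with h' | h'
        · rw [hAe0 i t h', zero_mul]
        · rw [usolve_lower Aext dg (by omega), mul_zero]
      · intro h
        exact absurd (Finset.mem_range.2 i.2) h
    · -- i > j
      have hU0 : (U i j : ℝ) = 0 := by
        show usolve Aext dg i.1 j.1 = 0
        exact usolve_lower Aext dg hij
      rw [hU0, zero_mul]
      apply Finset.sum_eq_zero
      intro t _
      rcases Nat.lt_or_ge t i.1 with h' | h'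
      · rw [hAe0 i t h', zero_mul]
      · rw [usolve_lower Aext dg (by omega), mul_zero]
  · have htri : U.BlockTriangular id := by
      intro i j hji
      exact usolve_lower Aext dg hji
    rw [Matrix.det_of_upperTriangular htri]
    have : ∀ i : Fin n, U i i = 1 := fun i => usolve_diag Aext dg i.1
    rw [Finset.prod_congr rfl fun i _ => this i]
    simp


noncomputable def Vmat (k : ℕ) : Matrix (Fin (k - 1)) (Fin (k - 1)) ℝ :=
  Matrix.vandermonde (fun l : Fin (k - 1) => (l.1 : ℝ) + 2)

noncomputable def Amat (k : ℕ) : Matrix (Fin (k - 1)) (Fin (k - 1)) ℝ :=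
  fun e d => (rP k d.1).coeff e.1

lemma NV_eq (k : ℕ) (hk : 2 ≤ k) : Nmat k * Vmat k = Vmat k * Amat k := by
  funext l d
  have hl : l.1 < k - 1 := l.2
  have hd : d.1 < k - 1 := d.2
  have hV : ∀ (a : ℕ) (ha : a < k - 1), Vmat k ⟨a, ha⟩ d = ((a : ℝ) + 2) ^ d.1 :=
    fun a ha => rfl
  have expand : (Nmat k * Vmat k) l d =
      (if h : l.1 + 0 < k-1 then 2 * qr k (l.1 + 2) * Vmat k ⟨l.1 + 0, h⟩ d else 0)
      + (if h : l.1 + 1 < k-1 then -qr k (l.1 + 3) * Vmat k ⟨l.1 + 1, h⟩ d else 0)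
      + (if h : 1 ≤ l.1 then -qr k (l.1 + 1) * Vmat k ⟨l.1 - 1, by omega⟩ d else 0) := by
    nth_rewrite 1 [nmat_split k]
    rw [Matrix.add_mul, Matrix.add_mul, Matrix.add_apply, Matrix.add_apply,
      up_mul, up_mul, dn_mul]
  have T2 : (if h : l.1 + 1 < k-1 then -qr k (l.1 + 3) * Vmat k ⟨l.1 + 1, h⟩ d else 0)
      = -qr k (l.1+3) * ((l.1 : ℝ) + 3) ^ d.1 := by
    split_ifs with h
    · rw [hV]
      have : ((l.1 + 1 : ℕ) : ℝ) + 2 = (l.1 : ℝ) + 3 := by push_cast; ring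
      rw [this]
    · rw [show l.1 + 3 = k + 1 by omega, qr_top]; ring
  have T3 : (if h : 1 ≤ l.1 then -qr k (l.1 + 1) * Vmat k ⟨l.1 - 1, by omega⟩ d else 0)
      = -qr k (l.1+1) * ((l.1 : ℝ) + 1) ^ d.1 := by
    split_ifs with h
    · rw [hV]
      have : ((l.1 - 1 : ℕ) : ℝ) + 2 = (l.1 : ℝ) + 1 := by
        rw [Nat.cast_sub (by omega)]; ring
      rw [this]
    · rw [show l.1 + 1 = 1 by omega, qr_one]; ring
  have RHS : (Vmat k * Amat k) l d = (rP k d.1).eval ((l.1 : ℝ) + 2) := by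
    rw [Matrix.mul_apply]
    have hdeg : (rP k d.1).natDegree < k - 1 := lt_of_le_of_lt (natDegree_rP_le k d.1) hd
    rw [Polynomial.eval_eq_sum_range' hdeg,
      ← Fin.sum_univ_eq_sum_range (fun e => (rP k d.1).coeff e * ((l.1 : ℝ) + 2) ^ e)]
    exact Finset.sum_congr rfl fun e _ => by rw [mul_comm]; rfl
  rw [expand, dif_pos (show l.1 + 0 < k - 1 by omega), hV, T2, T3, RHS, eval_rP]
  have hcast : ((l.1 + 0 : ℕ) : ℝ) = (l.1 : ℝ) := by push_cast; ring
  rw [hcast]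
  unfold qr; push_cast; ring

lemma dg_inj : ∀ p q : ℕ, p < q →
    ((((p+1)*(p+2)/2 : ℕ)) : ℝ) ≠ ((((q+1)*(q+2)/2 : ℕ)) : ℝ) := by
  intro p q h hne
  have heq : (p+1)*(p+2)/2 = (q+1)*(q+2)/2 := Nat.cast_injective hne
  have h1 : (p+1)*(p+2) < (q+1)*(q+2) := by nlinarith
  have d1 : 2 ∣ (p+1)*(p+2) := (Nat.even_mul_succ_self (p+1)).two_dvd
  have d2 : 2 ∣ (q+1)*(q+2) := (Nat.even_mul_succ_self (q+1)).two_dvd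
  omega

lemma assemble {n : ℕ} (H N V A U D : Matrix (Fin n) (Fin n) ℝ)
    (hNN : H = N * N + N) (hNV : N * V = V * A) (hAU : A * U = U * D)
    (hVdet : IsUnit V.det) (hUdet : IsUnit U.det) :
    IsUnit (V * U).det ∧ H = (V * U) * (D * D + D) * (V * U)⁻¹ := by
  have hPdet : IsUnit (V * U).det := by
    rw [Matrix.det_mul]
    exact hVdet.mul hUdet
  have hNP : N * (V * U) = (V * U) * D := by
    rw [← Matrix.mul_assoc, hNV, Matrix.mul_assoc, hAU, ← Matrix.mul_assoc]
  have hHP : H * (V * U) = (V * U) * (D * D + D) := by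
    calc H * (V * U) = N * (N * (V * U)) + N * (V * U) := by rw [hNN]; noncomm_ring
    _ = N * ((V * U) * D) + (V * U) * D := by rw [hNP]
    _ = (N * (V * U)) * D + (V * U) * D := by noncomm_ring
    _ = ((V * U) * D) * D + (V * U) * D := by rw [hNP]
    _ = (V * U) * (D * D + D) := by noncomm_ring
  refine ⟨hPdet, ?_⟩
  calc H = H * ((V * U) * (V * U)⁻¹) := by
        rw [Matrix.mul_nonsing_inv _ hPdet, Matrix.mul_one]
  _ = (H * (V * U)) * (V * U)⁻¹ := by rw [← Matrix.mul_assoc]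
  _ = ((V * U) * (D * D + D)) * (V * U)⁻¹ := by rw [hHP]

end CHaux

open CHaux

/-- The linearization matrix `𝓗` is diagonalizable over `ℝ` with eigenvalues exactly
`λ_m = T_m(T_m + 1)`, `T_m = m(m+1)/2`, for `m = 1,…,k−1`. -/
theorem Hmat_diagonalizable_with_triangular_eigenvalues (k : ℕ) (hk : 2 ≤ k) :
    ∃ P : Matrix (Fin (k - 1)) (Fin (k - 1)) ℝ, IsUnit P.det ∧
      Hmat k = P * Matrix.diagonal (fun m : Fin (k - 1) =>
          (((m.1 + 1) * (m.1 + 2) / 2 : ℕ) : ℝ) * ((((m.1 + 1) * (m.1 + 2) / 2 : ℕ) : ℝ) + 1))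
        * P⁻¹ := by
  have hNN : Hmat k = Nmat k * Nmat k + Nmat k := by
    have h1 : Hmat k = Hpent k := funext fun l => funext fun j => hmat_eq k hk l j
    rw [h1, pent_eq k hk]
  have hVdet : IsUnit (Vmat k).det := by
    have hinj : Function.Injective (fun l : Fin (k - 1) => (l.1 : ℝ) + 2) := by
      intro a b hab
      simp only [add_left_inj, Nat.cast_inj] at hab
      exact Fin.ext hab
    have : (Vmat k).det ≠ 0 := by
      unfold Vmat
      exact Matrix.det_vandermonde_ne_zero_iff.2 hinj
    exact isUnit_iff_ne_zero.2 this
  obtain ⟨U, hAU, hUdet⟩ := mul_usolve (k - 1) (Amat k)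
    (fun m : ℕ => (((m + 1) * (m + 2) / 2 : ℕ) : ℝ))
    (fun i j hji => coeff_rP_high k j.1 i.1 hji)
    (fun i => coeff_rP_diag k i.1)
    dg_inj
  obtain ⟨hPdet, hconj⟩ := assemble (Hmat k) (Nmat k) (Vmat k) (Amat k) U
    (Matrix.diagonal (fun m : Fin (k - 1) => (((m.1 + 1) * (m.1 + 2) / 2 : ℕ) : ℝ)))
    hNN (NV_eq k hk) hAU hVdet hUdet
  refine ⟨Vmat k * U, hPdet, ?_⟩
  rw [hconj]
  have hDD : ((Matrix.diagonal fun m : Fin (k-1) => (((m.1 + 1) * (m.1 + 2) / 2 : ℕ) : ℝ)) *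
        Matrix.diagonal fun m : Fin (k-1) => (((m.1 + 1) * (m.1 + 2) / 2 : ℕ) : ℝ)) +
        (Matrix.diagonal fun m : Fin (k-1) => (((m.1 + 1) * (m.1 + 2) / 2 : ℕ) : ℝ))
      = Matrix.diagonal (fun m : Fin (k - 1) =>
          (((m.1 + 1) * (m.1 + 2) / 2 : ℕ) : ℝ) * ((((m.1 + 1) * (m.1 + 2) / 2 : ℕ) : ℝ) + 1)) := by
    rw [Matrix.diagonal_mul_diagonal, Matrix.diagonal_add]
    apply congrArg
    funext m
    ring
  rw [hDD]
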